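/- A linear dynamical system (A,C) of size (0,2,1) (A a 2×2 complex matrix, B the empty 2×0 matrix, C a 1×2 complex matrix) is indecomposable if and only if it is equivalent to one of the following canonical forms: (J₂(λ), C = (1,0)) for some λ ∈ ℂ, (J₂(λ), C = (0,1)) for some λ ∈ ℂ, or (diag(λ,μ), C = (1,1)) for some λ, μ ∈ ℂ with λ ≠ μ. -/
import Mathlib


open Matrix

/-- Two linear dynamical systems `(A,B,C)` and `(A',B',C')` of size `(m,n,l)` are
equivalent if there are invertible matrices `X, Y, Z` with
`A' = Y A Y⁻¹`, `B' = Y B X⁻¹`, `C' = Z C Y⁻¹`. -/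
def SysEquiv {m n l : ℕ}
    (A : Matrix (Fin n) (Fin n) ℂ) (B : Matrix (Fin n) (Fin m) ℂ) (C : Matrix (Fin l) (Fin n) ℂ)
    (A' : Matrix (Fin n) (Fin n) ℂ) (B' : Matrix (Fin n) (Fin m) ℂ) (C' : Matrix (Fin l) (Fin n) ℂ) :
    Prop :=
  ∃ (X : Matrix (Fin m) (Fin m) ℂ) (Y : Matrix (Fin n) (Fin n) ℂ) (Z : Matrix (Fin l) (Fin l) ℂ),
    IsUnit X ∧ IsUnit Y ∧ IsUnit Z ∧
      A' = Y * A * Y⁻¹ ∧ B' = Y * B * X⁻¹ ∧ C' = Z * C * Y⁻¹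

/-- A system of size `(m,n,l)` is decomposable if it is equivalent to a direct sum
(block-diagonal) of two systems, each of nonzero total size. -/
def Decomposable {m n l : ℕ}
    (A : Matrix (Fin n) (Fin n) ℂ) (B : Matrix (Fin n) (Fin m) ℂ)
    (C : Matrix (Fin l) (Fin n) ℂ) : Prop :=
  ∃ (m₁ m₂ n₁ n₂ l₁ l₂ : ℕ) (hm : m₁ + m₂ = m) (hn : n₁ + n₂ = n) (hl : l₁ + l₂ = l)
    (A₁ : Matrix (Fin n₁) (Fin n₁) ℂ) (B₁ : Matrix (Fin n₁) (Fin m₁) ℂ)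
    (C₁ : Matrix (Fin l₁) (Fin n₁) ℂ)
    (A₂ : Matrix (Fin n₂) (Fin n₂) ℂ) (B₂ : Matrix (Fin n₂) (Fin m₂) ℂ)
    (C₂ : Matrix (Fin l₂) (Fin n₂) ℂ),
    0 < m₁ + n₁ + l₁ ∧ 0 < m₂ + n₂ + l₂ ∧
      SysEquiv A B C
        (Matrix.reindex (finSumFinEquiv.trans (finCongr hn)) (finSumFinEquiv.trans (finCongr hn))
          (Matrix.fromBlocks A₁ 0 0 A₂))
        (Matrix.reindex (finSumFinEquiv.trans (finCongr hn)) (finSumFinEquiv.trans (finCongr hm))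
          (Matrix.fromBlocks B₁ 0 0 B₂))
        (Matrix.reindex (finSumFinEquiv.trans (finCongr hl)) (finSumFinEquiv.trans (finCongr hn))
          (Matrix.fromBlocks C₁ 0 0 C₂))

/-- A system is indecomposable if it is not decomposable. -/
def Indecomposable {m n l : ℕ}
    (A : Matrix (Fin n) (Fin n) ℂ) (B : Matrix (Fin n) (Fin m) ℂ)
    (C : Matrix (Fin l) (Fin n) ℂ) : Prop :=
  ¬ Decomposable A B C

/- ### Auxiliary material -/

section Aux

abbrev XM2 := Matrix (Fin 2) (Fin 2) ℂ
abbrev XM12 := Matrix (Fin 1) (Fin 2) ℂ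
abbrev XM11 := Matrix (Fin 1) (Fin 1) ℂ

lemma isUnit_inv_of {k : ℕ} {Y : Matrix (Fin k) (Fin k) ℂ} (hY : IsUnit Y) : IsUnit Y⁻¹ := by
  have hd := (Matrix.isUnit_iff_isUnit_det Y).1 hY
  exact ⟨⟨Y⁻¹, Y, Matrix.nonsing_inv_mul _ hd, Matrix.mul_nonsing_inv _ hd⟩, rfl⟩

lemma SE_trans {m n l : ℕ} {A A' A'' : Matrix (Fin n) (Fin n) ℂ} {B B' B'' : Matrix (Fin n) (Fin m) ℂ}
    {C C' C'' : Matrix (Fin l) (Fin n) ℂ}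
    (h1 : SysEquiv A B C A' B' C') (h2 : SysEquiv A' B' C' A'' B'' C'') :
    SysEquiv A B C A'' B'' C'' := by
  obtain ⟨X, Y, Z, hX, hY, hZ, hA, hB, hC⟩ := h1
  obtain ⟨X', Y', Z', hX', hY', hZ', hA', hB', hC'⟩ := h2
  refine ⟨X' * X, Y' * Y, Z' * Z, hX'.mul hX, hY'.mul hY, hZ'.mul hZ, ?_, ?_, ?_⟩
  · rw [hA', hA, Matrix.mul_inv_rev]; simp only [Matrix.mul_assoc]
  · rw [hB', hB, Matrix.mul_inv_rev]; simp only [Matrix.mul_assoc]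
  · rw [hC', hC, Matrix.mul_inv_rev]; simp only [Matrix.mul_assoc]

lemma SE_symm {m n l : ℕ} {A A' : Matrix (Fin n) (Fin n) ℂ} {B B' : Matrix (Fin n) (Fin m) ℂ}
    {C C' : Matrix (Fin l) (Fin n) ℂ}
    (h : SysEquiv A B C A' B' C') : SysEquiv A' B' C' A B C := by
  obtain ⟨X, Y, Z, hX, hY, hZ, hA, hB, hC⟩ := h
  have hYd := (Matrix.isUnit_iff_isUnit_det Y).1 hY
  have hXd := (Matrix.isUnit_iff_isUnit_det X).1 hX
  have hZd := (Matrix.isUnit_iff_isUnit_det Z).1 hZ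
  refine ⟨X⁻¹, Y⁻¹, Z⁻¹, isUnit_inv_of hX, isUnit_inv_of hY, isUnit_inv_of hZ, ?_, ?_, ?_⟩
  · rw [hA, Matrix.nonsing_inv_nonsing_inv _ hYd]
    rw [show Y⁻¹ * (Y * A * Y⁻¹) * Y = (Y⁻¹ * Y) * A * (Y⁻¹ * Y) by simp only [Matrix.mul_assoc],
      Matrix.nonsing_inv_mul _ hYd]; simp
  · rw [hB, Matrix.nonsing_inv_nonsing_inv _ hXd]
    rw [show Y⁻¹ * (Y * B * X⁻¹) * X = (Y⁻¹ * Y) * (B * (X⁻¹ * X)) by simp only [Matrix.mul_assoc],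
      Matrix.nonsing_inv_mul _ hYd, Matrix.nonsing_inv_mul _ hXd]; simp
  · rw [hC, Matrix.nonsing_inv_nonsing_inv _ hYd]
    rw [show Z⁻¹ * (Z * C * Y⁻¹) * Y = (Z⁻¹ * Z) * (C * (Y⁻¹ * Y)) by simp only [Matrix.mul_assoc],
      Matrix.nonsing_inv_mul _ hYd, Matrix.nonsing_inv_mul _ hZd]; simp

lemma SE_step (A A' : XM2) (C C' : XM12) (Y : XM2) (z : ℂ)
    (hY : IsUnit Y.det) (hz : z ≠ 0) (hA : A' * Y = Y * A) (hC : C' * Y = z • C) :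
    SysEquiv A (0 : Matrix (Fin 2) (Fin 0) ℂ) C A' 0 C' := by
  refine ⟨1, Y, z • 1, isUnit_one, (Matrix.isUnit_iff_isUnit_det Y).2 hY, ?_, ?_, ?_, ?_⟩
  · rw [Matrix.isUnit_iff_isUnit_det]
    simpa [Matrix.det_fin_one] using hz.isUnit
  · rw [← hA, Matrix.mul_assoc, Matrix.mul_nonsing_inv _ hY, Matrix.mul_one]
  · simp
  · rw [Matrix.smul_mul, Matrix.one_mul, ← hC, Matrix.mul_assoc,
      Matrix.mul_nonsing_inv _ hY, Matrix.mul_one]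

lemma e11_0 (hn : 1 + 1 = 2) : (finSumFinEquiv.trans (finCongr hn)).symm (0 : Fin 2) = Sum.inl 0 := by
  rw [Equiv.symm_apply_eq]; simp [finSumFinEquiv_apply_left]; rfl
lemma e11_1 (hn : 1 + 1 = 2) : (finSumFinEquiv.trans (finCongr hn)).symm (1 : Fin 2) = Sum.inr 0 := by
  rw [Equiv.symm_apply_eq]; simp [finSumFinEquiv_apply_right]; rfl
lemma e20 (hn : 2 + 0 = 2) (j : Fin 2) : (finSumFinEquiv.trans (finCongr hn)).symm j = Sum.inl j := by
  rw [Equiv.symm_apply_eq]; simp [finSumFinEquiv_apply_left]; rfl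
lemma e10 (hl : 1 + 0 = 1) (j : Fin 1) : (finSumFinEquiv.trans (finCongr hl)).symm j = Sum.inl 0 := by
  rw [Equiv.symm_apply_eq]; simp [finSumFinEquiv_apply_left]
  exact Subsingleton.elim _ _
lemma e01 (hl : 0 + 1 = 1) (j : Fin 1) : (finSumFinEquiv.trans (finCongr hl)).symm j = Sum.inr 0 := by
  rw [Equiv.symm_apply_eq]; simp [finSumFinEquiv_apply_right]
  exact Subsingleton.elim _ _

lemma blkD11 (hn : 1+1=2) (A₁ A₂ : Matrix (Fin 1) (Fin 1) ℂ) :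
    (Matrix.reindex (finSumFinEquiv.trans (finCongr hn)) (finSumFinEquiv.trans (finCongr hn))
      (Matrix.fromBlocks A₁ 0 0 A₂)) = !![A₁ 0 0, 0; 0, A₂ 0 0] := by
  ext i j
  simp only [Matrix.reindex_apply, Matrix.submatrix_apply]
  fin_cases i <;> fin_cases j <;> simp only [Fin.zero_eta, Fin.mk_one]
  · rw [e11_0 hn]; simp
  · rw [e11_0 hn, e11_1 hn]; simp
  · rw [e11_1 hn, e11_0 hn]; simp
  · rw [e11_1 hn]; simp

lemma blkC_l10 (hn : 1+1=2) (hl : 1+0=1) (C₁ : Matrix (Fin 1) (Fin 1) ℂ)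
    (C₂ : Matrix (Fin 0) (Fin 1) ℂ) :
    (Matrix.reindex (finSumFinEquiv.trans (finCongr hl)) (finSumFinEquiv.trans (finCongr hn))
      (Matrix.fromBlocks C₁ 0 0 C₂)) = !![C₁ 0 0, 0] := by
  ext i j
  simp only [Matrix.reindex_apply, Matrix.submatrix_apply]
  fin_cases i <;> fin_cases j <;> simp only [Fin.zero_eta, Fin.mk_one]
  · rw [e10 hl, e11_0 hn]; simp
  · rw [e10 hl, e11_1 hn]; simp

lemma blkC_l01 (hn : 1+1=2) (hl : 0+1=1) (C₁ : Matrix (Fin 0) (Fin 1) ℂ)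
    (C₂ : Matrix (Fin 1) (Fin 1) ℂ) :
    (Matrix.reindex (finSumFinEquiv.trans (finCongr hl)) (finSumFinEquiv.trans (finCongr hn))
      (Matrix.fromBlocks C₁ 0 0 C₂)) = !![0, C₂ 0 0] := by
  ext i j
  simp only [Matrix.reindex_apply, Matrix.submatrix_apply]
  fin_cases i <;> fin_cases j <;> simp only [Fin.zero_eta, Fin.mk_one]
  · rw [e01 hl, e11_0 hn]; simp
  · rw [e01 hl, e11_1 hn]; simp

lemma blkD20 (hn : 2+0=2) (A₁ : Matrix (Fin 2) (Fin 2) ℂ) (A₂ : Matrix (Fin 0) (Fin 0) ℂ) :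
    (Matrix.reindex (finSumFinEquiv.trans (finCongr hn)) (finSumFinEquiv.trans (finCongr hn))
      (Matrix.fromBlocks A₁ 0 0 A₂)) = A₁ := by
  ext i j
  simp only [Matrix.reindex_apply, Matrix.submatrix_apply]
  rw [e20 hn, e20 hn]; simp [Matrix.fromBlocks]

lemma blkC_20_01 (hn : 2+0=2) (hl : 0+1=1) (C₁ : Matrix (Fin 0) (Fin 2) ℂ)
    (C₂ : Matrix (Fin 1) (Fin 0) ℂ) :
    (Matrix.reindex (finSumFinEquiv.trans (finCongr hl)) (finSumFinEquiv.trans (finCongr hn))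
      (Matrix.fromBlocks C₁ 0 0 C₂)) = 0 := by
  ext i j
  simp only [Matrix.reindex_apply, Matrix.submatrix_apply]
  rw [e01 hl, e20 hn]; simp

lemma blkC_02_10 (hn : 0+2=2) (hl : 1+0=1) (C₁ : Matrix (Fin 1) (Fin 0) ℂ)
    (C₂ : Matrix (Fin 0) (Fin 2) ℂ) :
    (Matrix.reindex (finSumFinEquiv.trans (finCongr hl)) (finSumFinEquiv.trans (finCongr hn))
      (Matrix.fromBlocks C₁ 0 0 C₂)) = 0 := by
  ext i j
  rw [Matrix.reindex_apply, Matrix.submatrix_apply]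
  rcases hr : (finSumFinEquiv.trans (finCongr hl)).symm i with r | r
  · rcases hc : (finSumFinEquiv.trans (finCongr hn)).symm j with c | c
    · exact c.elim0
    · simp [Matrix.fromBlocks]
  · exact r.elim0

lemma Bzero (M : Matrix (Fin 2) (Fin 0) ℂ) : M = 0 := by
  ext i j; exact j.elim0

/-- Decomposability from `C = 0`. -/
lemma decomp_C_zero (A : XM2) : Decomposable A (0 : Matrix (Fin 2) (Fin 0) ℂ) (0 : XM12) := by
  refine ⟨0, 0, 2, 0, 0, 1, rfl, rfl, rfl, A, 0, 0, 0, 0, 0, by norm_num, by norm_num, ?_⟩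
  rw [blkD20, blkC_20_01, Bzero (Matrix.reindex _ _ _)]
  refine ⟨1, 1, 1, isUnit_one, isUnit_one, isUnit_one, ?_, ?_, ?_⟩ <;> simp

/-- Decomposability from an equivalence with a split system, `C` supported on the left. -/
lemma decomp_diag_l (A : XM2) (C : XM12) (a d c : ℂ)
    (h : SysEquiv A (0 : Matrix (Fin 2) (Fin 0) ℂ) C !![a, 0; 0, d] 0 !![c, 0]) :
    Decomposable A (0 : Matrix (Fin 2) (Fin 0) ℂ) C := by
  refine ⟨0, 0, 1, 1, 1, 0, rfl, rfl, rfl, !![a], 0, !![c], !![d], 0, 0,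
    by norm_num, by norm_num, ?_⟩
  rw [blkD11, blkC_l10, Bzero (Matrix.reindex _ _ _)]
  simpa using h

/-- Decomposability from an equivalence with a split system, `C` supported on the right. -/
lemma decomp_diag_r (A : XM2) (C : XM12) (a d c : ℂ)
    (h : SysEquiv A (0 : Matrix (Fin 2) (Fin 0) ℂ) C !![a, 0; 0, d] 0 !![0, c]) :
    Decomposable A (0 : Matrix (Fin 2) (Fin 0) ℂ) C := by
  refine ⟨0, 0, 1, 1, 0, 1, rfl, rfl, rfl, !![a], 0, 0, !![d], 0, !![c],
    by norm_num, by norm_num, ?_⟩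
  rw [blkD11, blkC_l01, Bzero (Matrix.reindex _ _ _)]
  simpa using h

end Aux
section Aux2
open Matrix

lemma L_zero (Y : XM2) (Z : XM11) (Cj : XM12) (hY : IsUnit Y) (hZ : IsUnit Z)
    (h : (0 : XM12) = Z * Cj * Y⁻¹) : Cj = 0 := by
  have hYd := (Matrix.isUnit_iff_isUnit_det Y).1 hY
  have hZd := (Matrix.isUnit_iff_isUnit_det Z).1 hZ
  have h1 : (0 : XM12) = Z * Cj := by
    have h2 := congrArg (fun M : XM12 => M * Y) h
    simp only [Matrix.zero_mul, Matrix.mul_assoc] at h2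
    rwa [Matrix.nonsing_inv_mul _ hYd, Matrix.mul_one] at h2
  have h2 := congrArg (fun M : XM12 => Z⁻¹ * M) h1
  simp only [Matrix.mul_zero, ← Matrix.mul_assoc] at h2
  rw [Matrix.nonsing_inv_mul _ hZd, Matrix.one_mul] at h2
  exact h2.symm

lemma L_jordan (lam : ℂ) (Y D : XM2) (hY : IsUnit Y) (h01 : D 0 1 = 0) (h10 : D 1 0 = 0)
    (hD : D = Y * !![lam, 1; 0, lam] * Y⁻¹) : False := by
  have hYd := (Matrix.isUnit_iff_isUnit_det Y).1 hY
  have hDY : D * Y = Y * !![lam, 1; 0, lam] := by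
    rw [hD]; simp only [Matrix.mul_assoc]
    rw [Matrix.nonsing_inv_mul _ hYd, Matrix.mul_one]
  have e00 := congrFun (congrFun hDY 0) 0
  have e01 := congrFun (congrFun hDY 0) 1
  have e10 := congrFun (congrFun hDY 1) 0
  have e11 := congrFun (congrFun hDY 1) 1
  simp [Matrix.mul_apply, Fin.sum_univ_two, h01, h10] at e00 e01 e10 e11
  -- e00 : D 0 0 * Y 0 0 = Y 0 0 * lam
  -- e01 : D 0 0 * Y 0 1 = Y 0 0 + Y 0 1 * lam
  -- e10 : D 1 1 * Y 1 0 = Y 1 0 * lam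
  -- e11 : D 1 1 * Y 1 1 = Y 1 0 + Y 1 1 * lam
  have hy00 : Y 0 0 = 0 := by
    rcases mul_eq_zero.1 (show (D 0 0 - lam) * Y 0 0 = 0 by linear_combination e00) with h | h
    · have ha : D 0 0 = lam := by linear_combination h
      rw [ha] at e01; linear_combination -e01
    · exact h
  have hy10 : Y 1 0 = 0 := by
    rcases mul_eq_zero.1 (show (D 1 1 - lam) * Y 1 0 = 0 by linear_combination e10) with h | h
    · have ha : D 1 1 = lam := by linear_combination h
      rw [ha] at e11; linear_combination -e11
    · exact h
  have : Y.det = 0 := by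
    rw [Matrix.det_fin_two, hy00, hy10]; ring
  exact hYd.ne_zero this

lemma L_diag (lam mu : ℂ) (hne : lam ≠ mu) (Y D : XM2) (Z : XM11) (E : XM12)
    (hY : IsUnit Y) (hZ : IsUnit Z) (h01 : D 0 1 = 0) (h10 : D 1 0 = 0)
    (hEz : E 0 0 = 0 ∨ E 0 1 = 0)
    (hD : D = Y * !![lam, 0; 0, mu] * Y⁻¹) (hE : E = Z * (!![1, 1] : XM12) * Y⁻¹) : False := by
  have hYd := (Matrix.isUnit_iff_isUnit_det Y).1 hY
  have hZd := (Matrix.isUnit_iff_isUnit_det Z).1 hZ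
  have hz : Z 0 0 ≠ 0 := by
    rw [Matrix.det_fin_one] at hZd; exact hZd.ne_zero
  have hWdet : Y⁻¹.det * Y.det = 1 := by
    rw [← Matrix.det_mul, Matrix.nonsing_inv_mul _ hYd, Matrix.det_one]
  have hWd : Y⁻¹.det ≠ 0 := left_ne_zero_of_mul_eq_one hWdet
  have hWD : Y⁻¹ * D = !![lam, 0; 0, mu] * Y⁻¹ := by
    rw [hD]
    rw [show Y⁻¹ * (Y * !![lam, 0; 0, mu] * Y⁻¹) = (Y⁻¹ * Y) * (!![lam, 0; 0, mu] * Y⁻¹) by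
      simp only [Matrix.mul_assoc], Matrix.nonsing_inv_mul _ hYd, Matrix.one_mul]
  have f00 := congrFun (congrFun hWD 0) 0
  have f01 := congrFun (congrFun hWD 0) 1
  have f10 := congrFun (congrFun hWD 1) 0
  have f11 := congrFun (congrFun hWD 1) 1
  simp [Matrix.mul_apply, Fin.sum_univ_two, h01, h10] at f00 f01 f10 f11
  -- f00 : Y⁻¹ 0 0 * D 0 0 = lam * Y⁻¹ 0 0
  -- f01 : Y⁻¹ 0 1 * D 1 1 = lam * Y⁻¹ 0 1
  -- f10 : Y⁻¹ 1 0 * D 0 0 = mu * Y⁻¹ 1 0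
  -- f11 : Y⁻¹ 1 1 * D 1 1 = mu * Y⁻¹ 1 1
  have hEe : ∀ j, E 0 j = Z 0 0 * Y⁻¹ 0 j + Z 0 0 * Y⁻¹ 1 j := by
    intro j
    rw [hE]
    simp [Matrix.mul_apply, Fin.sum_univ_two, Fin.sum_univ_succ]
  rcases hEz with hz0 | hz1
  · have hsum : Y⁻¹ 0 0 = - Y⁻¹ 1 0 := by
      have := (hEe 0).symm.trans hz0
      rcases mul_eq_zero.1 (show Z 0 0 * (Y⁻¹ 0 0 + Y⁻¹ 1 0) = 0 by linear_combination this) with h | h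
      · exact absurd h hz
      · linear_combination h
    have h10' : Y⁻¹ 1 0 = 0 := by
      by_contra hne0
      have h00' : Y⁻¹ 0 0 ≠ 0 := by rw [hsum]; simpa using hne0
      have ha : D 0 0 = lam := by
        rcases mul_eq_zero.1 (show (D 0 0 - lam) * Y⁻¹ 0 0 = 0 by linear_combination f00) with h | h
        · linear_combination h
        · exact absurd h h00'
      have hb : D 0 0 = mu := by
        rcases mul_eq_zero.1 (show (D 0 0 - mu) * Y⁻¹ 1 0 = 0 by linear_combination f10) with h | h
        · linear_combination h
        · exact absurd h hne0
      exact hne (ha ▸ hb ▸ rfl)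
    have h00' : Y⁻¹ 0 0 = 0 := by rw [hsum, h10']; ring
    have : Y⁻¹.det = 0 := by rw [Matrix.det_fin_two, h00', h10']; ring
    exact hWd this
  · have hsum : Y⁻¹ 0 1 = - Y⁻¹ 1 1 := by
      have := (hEe 1).symm.trans hz1
      rcases mul_eq_zero.1 (show Z 0 0 * (Y⁻¹ 0 1 + Y⁻¹ 1 1) = 0 by linear_combination this) with h | h
      · exact absurd h hz
      · linear_combination h
    have h11' : Y⁻¹ 1 1 = 0 := by
      by_contra hne0
      have h01' : Y⁻¹ 0 1 ≠ 0 := by rw [hsum]; simpa using hne0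
      have ha : D 1 1 = lam := by
        rcases mul_eq_zero.1 (show (D 1 1 - lam) * Y⁻¹ 0 1 = 0 by linear_combination f01) with h | h
        · linear_combination h
        · exact absurd h h01'
      have hb : D 1 1 = mu := by
        rcases mul_eq_zero.1 (show (D 1 1 - mu) * Y⁻¹ 1 1 = 0 by linear_combination f11) with h | h
        · linear_combination h
        · exact absurd h hne0
      exact hne (ha ▸ hb ▸ rfl)
    have h01' : Y⁻¹ 0 1 = 0 := by rw [hsum, h11']; ring
    have : Y⁻¹.det = 0 := by rw [Matrix.det_fin_two, h01', h11']; ring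
    exact hWd this

end Aux2
section Aux3
open Matrix

/-- Master lemma: a size (0,2,1) system equivalent to `(J, Cj)` is indecomposable provided
`Cj ≠ 0` and the pair `(J, Cj)` cannot be brought to split form. -/
lemma canonical_indecomposable (J : XM2) (Cj : XM12) (hCj : Cj ≠ 0)
    (hkey : ∀ (Y : XM2) (Z : XM11) (D : XM2) (E : XM12), IsUnit Y → IsUnit Z →
      D 0 1 = 0 → D 1 0 = 0 → (E 0 0 = 0 ∨ E 0 1 = 0) →
      D = Y * J * Y⁻¹ → E = Z * Cj * Y⁻¹ → False)
    (A : XM2) (C : XM12) (hcanon : SysEquiv A (0 : Matrix (Fin 2) (Fin 0) ℂ) C J 0 Cj) :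
    Indecomposable A (0 : Matrix (Fin 2) (Fin 0) ℂ) C := by
  intro hdec
  obtain ⟨m₁, m₂, n₁, n₂, l₁, l₂, hm, hn, hl, A₁, B₁, C₁, A₂, B₂, C₂, hp1, hp2, hse⟩ := hdec
  have hm1 : m₁ = 0 := by omega
  have hm2 : m₂ = 0 := by omega
  subst hm1 hm2
  have hJblk := SE_trans (SE_symm hcanon) hse
  obtain ⟨X, Y, Z, hX, hY, hZ, hA, hB, hC⟩ := hJblk
  have hncase : (n₁ = 0 ∧ n₂ = 2) ∨ (n₁ = 1 ∧ n₂ = 1) ∨ (n₁ = 2 ∧ n₂ = 0) := by omega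
  have hlcase : (l₁ = 0 ∧ l₂ = 1) ∨ (l₁ = 1 ∧ l₂ = 0) := by omega
  rcases hncase with ⟨h1, h2⟩ | ⟨h1, h2⟩ | ⟨h1, h2⟩ <;> subst h1 h2 <;>
    rcases hlcase with ⟨g1, g2⟩ | ⟨g1, g2⟩ <;> subst g1 g2
  · -- n = (0,2), l = (0,1) : first subsystem empty, contradiction with positivity
    omega
  · -- n = (0,2), l = (1,0) : E = 0, so Cj = 0
    rw [blkC_02_10 hn hl] at hC
    exact hCj (L_zero Y Z Cj hY hZ hC)
  · -- n = (1,1), l = (0,1)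
    rw [blkD11 hn] at hA
    rw [blkC_l01 hn hl] at hC
    refine hkey Y Z _ _ hY hZ (by simp) (by simp) (Or.inl (by simp)) hA hC
  · -- n = (1,1), l = (1,0)
    rw [blkD11 hn] at hA
    rw [blkC_l10 hn hl] at hC
    refine hkey Y Z _ _ hY hZ (by simp) (by simp) (Or.inr (by simp)) hA hC
  · -- n = (2,0), l = (0,1) : E = 0, so Cj = 0
    rw [blkC_20_01 hn hl] at hC
    exact hCj (L_zero Y Z Cj hY hZ hC)
  · -- n = (2,0), l = (1,0) : second subsystem empty
    omega

end Aux3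
/-- indecomposable size (0,2,1) systems are exactly those equivalent to
(J₂(λ), C=(1,0)), (J₂(λ), C=(0,1)), or (diag(λ,μ), C=(1,1)) with λ ≠ μ. -/
theorem size_0_2_1_indecomposable_iff_canonical
    (A : Matrix (Fin 2) (Fin 2) ℂ) (C : Matrix (Fin 1) (Fin 2) ℂ) :
    Indecomposable A (0 : Matrix (Fin 2) (Fin 0) ℂ) C ↔
      (∃ l : ℂ, SysEquiv A (0 : Matrix (Fin 2) (Fin 0) ℂ) C !![l, 1; 0, l] 0 !![1, 0]) ∨
      (∃ l : ℂ, SysEquiv A (0 : Matrix (Fin 2) (Fin 0) ℂ) C !![l, 1; 0, l] 0 !![0, 1]) ∨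
      (∃ l m : ℂ, l ≠ m ∧
        SysEquiv A (0 : Matrix (Fin 2) (Fin 0) ℂ) C !![l, 0; 0, m] 0 !![1, 1]) := by
  constructor
  · intro hind
    -- step 0 : C ≠ 0
    by_cases hC0 : C = 0
    · exact absurd (hC0 ▸ decomp_C_zero A) hind
    -- step 1 : normalize C to (1,0)
    obtain ⟨Y₁, hY₁, hCY⟩ : ∃ Y₁ : XM2, IsUnit Y₁.det ∧ (!![(1:ℂ), 0] : XM12) * Y₁ = C := by
      have hCeta : C = !![C 0 0, C 0 1] := by
        ext i j; fin_cases i <;> fin_cases j <;> rfl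
      by_cases hp : C 0 0 = 0
      · have hq : C 0 1 ≠ 0 := by
          intro hq; apply hC0; rw [hCeta, hp, hq]
          ext i j; fin_cases i <;> fin_cases j <;> simp
        refine ⟨!![0, C 0 1; 1, 0], ?_, ?_⟩
        · rw [Matrix.det_fin_two_of]; simpa using hq
        · rw [hCeta, hp]
          ext i j; fin_cases i <;> fin_cases j <;>
            simp [Matrix.mul_apply, Fin.sum_univ_two]
      · refine ⟨!![C 0 0, C 0 1; 0, 1], ?_, ?_⟩
        · rw [Matrix.det_fin_two_of]; simpa using hp
        · rw [hCeta]
          ext i j; fin_cases i <;> fin_cases j <;>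
            simp [Matrix.mul_apply, Fin.sum_univ_two]
    have step1 : SysEquiv A (0 : Matrix (Fin 2) (Fin 0) ℂ) C (Y₁ * A * Y₁⁻¹) 0 !![1, 0] := by
      refine SE_step A _ C _ Y₁ 1 hY₁ one_ne_zero ?_ ?_
      · rw [Matrix.mul_assoc (Y₁ * A), Matrix.nonsing_inv_mul _ hY₁, Matrix.mul_one]
      · rw [one_smul, hCY]
    obtain ⟨a, b, c, d, hAeta⟩ : ∃ a b c d : ℂ, Y₁ * A * Y₁⁻¹ = !![a, b; c, d] :=
      ⟨_, _, _, _, Matrix.eta_fin_two _⟩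
    rw [hAeta] at step1
    clear hAeta hCY hY₁
    by_cases hb : b = 0
    · by_cases hc : c = 0
      · -- already decomposed: contradiction
        rw [hb, hc] at step1
        exact absurd (decomp_diag_l A C a d 1 step1) hind
      · by_cases had : a = d
        · -- Jordan block with C = (0,1)
          rw [hb, ← had] at step1
          refine Or.inr (Or.inl ⟨a, SE_trans step1 (SE_step _ _ _ _ !![0, 1; c, 0] c ?_ hc ?_ ?_)⟩)
          · rw [Matrix.det_fin_two_of]; simpa using hc
          · ext i j; fin_cases i <;> fin_cases j <;>
              simp [Matrix.mul_apply, Fin.sum_univ_two] <;> ring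
          · ext i j; fin_cases i <;> fin_cases j <;>
              simp [Matrix.mul_apply, Fin.sum_univ_two]
        · -- can kill c: decomposable, contradiction
          have hda : d - a ≠ 0 := sub_ne_zero.2 (Ne.symm had)
          have step2 : SysEquiv !![a, b; c, d] (0 : Matrix (Fin 2) (Fin 0) ℂ) !![1, 0]
              !![a, 0; 0, d] 0 !![1, 0] := by
            refine SE_step _ _ _ _ !![1, 0; c / (d - a), 1] 1 ?_ one_ne_zero ?_ ?_
            · rw [Matrix.det_fin_two_of]; norm_num
            · ext i j; fin_cases i <;> fin_cases j <;>
                simp [Matrix.mul_apply, Fin.sum_univ_two, hb] <;> field_simp <;> ring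
            · ext i j; fin_cases i <;> fin_cases j <;>
                simp [Matrix.mul_apply, Fin.sum_univ_two]
          exact absurd (decomp_diag_l A C a d 1 (SE_trans step1 step2)) hind
    · -- observable case: reduce to companion form
      have step2 : SysEquiv !![a, b; c, d] (0 : Matrix (Fin 2) (Fin 0) ℂ) !![1, 0]
          !![0, 1; -(a * d - b * c), a + d] 0 !![1, 0] := by
        refine SE_step _ _ _ _ !![1, 0; a, b] 1 ?_ one_ne_zero ?_ ?_
        · rw [Matrix.det_fin_two_of]; simpa using hb
        · ext i j; fin_cases i <;> fin_cases j <;>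
            simp [Matrix.mul_apply, Fin.sum_univ_two] <;> ring
        · ext i j; fin_cases i <;> fin_cases j <;>
            simp [Matrix.mul_apply, Fin.sum_univ_two]
      obtain ⟨dl, hdl⟩ : ∃ dl : ℂ, dl ^ 2 = (a + d) ^ 2 - 4 * (a * d - b * c) :=
        IsAlgClosed.exists_pow_nat_eq _ (by norm_num : 0 < 2)
      by_cases hdl0 : dl = 0
      · -- double eigenvalue : Jordan form with C = (1,0)
        have hlam : ((a + d) / 2) ^ 2 = a * d - b * c := by
          rw [hdl0] at hdl; linear_combination (-1/4 : ℂ) * hdl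
        refine Or.inl ⟨(a + d) / 2, SE_trans (SE_trans step1 step2)
          (SE_step _ _ _ _ !![1, 0; -((a + d) / 2), 1] 1 ?_ one_ne_zero ?_ ?_)⟩
        · rw [Matrix.det_fin_two_of]; norm_num
        · ext i j; fin_cases i <;> fin_cases j <;>
            simp [Matrix.mul_apply, Fin.sum_univ_two] <;>
            first
            | linear_combination (-2 : ℂ) * hlam
            | linear_combination (-1 : ℂ) * hlam
            | linear_combination hlam
            | linear_combination (2 : ℂ) * hlam
            | ring
        · ext i j; fin_cases i <;> fin_cases j <;>
            simp [Matrix.mul_apply, Fin.sum_univ_two]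
      · -- distinct eigenvalues : diagonal form with C = (1,1)
        have hs : (a + d + dl) / 2 + (a + d - dl) / 2 = a + d := by ring
        have hp : ((a + d + dl) / 2) * ((a + d - dl) / 2) = a * d - b * c := by
          field_simp; linear_combination -hdl
        have hne : (a + d + dl) / 2 ≠ (a + d - dl) / 2 := by
          intro h; apply hdl0; field_simp at h; linear_combination h / 2
        refine Or.inr (Or.inr ⟨(a + d + dl) / 2, (a + d - dl) / 2, hne,
          SE_trans (SE_trans step1 step2)
          (SE_step _ _ _ _ !![-((a + d - dl) / 2), 1; (a + d + dl) / 2, -1] dl ?_ hdl0 ?_ ?_)⟩)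
        · rw [Matrix.det_fin_two_of, isUnit_iff_ne_zero]
          intro h; apply hdl0; linear_combination -h
        · ext i j; fin_cases i <;> fin_cases j <;>
            simp [Matrix.mul_apply, Fin.sum_univ_two] <;>
            first
            | linear_combination hp
            | linear_combination (-1 : ℂ) * hp
            | linear_combination (2 : ℂ) * hp
            | linear_combination (-2 : ℂ) * hp
            | ring
        · ext i j; fin_cases i <;> fin_cases j <;>
            simp [Matrix.mul_apply, Fin.sum_univ_two] <;> ring
  · rintro (⟨l, hse⟩ | ⟨l, hse⟩ | ⟨l, m, hlm, hse⟩)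
    · refine canonical_indecomposable _ _ (fun h => ?_)
        (fun Y Z D E hY hZ h01 h10 _ hD _ => L_jordan l Y D hY h01 h10 hD) A C hse
      have := congrFun (congrFun h 0) 0; simp at this
    · refine canonical_indecomposable _ _ (fun h => ?_)
        (fun Y Z D E hY hZ h01 h10 _ hD _ => L_jordan l Y D hY h01 h10 hD) A C hse
      have := congrFun (congrFun h 0) 1; simp at this
    · refine canonical_indecomposable _ _ (fun h => ?_)
        (fun Y Z D E hY hZ h01 h10 hE hD hC => L_diag l m hlm Y D Z E hY hZ h01 h10 hE hD hC) A C hse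
      have := congrFun (congrFun h 0) 0; simp at this
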